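/- Let J and D be Jacobi operators with orthonormal polynomials (P_k) and (Q_k) and connection coefficient matrix C = C_{J→D} with entries c_{ij}. Then: (a) for every j ≥ 0 and every i ≥ 0, c_{ij} = (P_j(D) e_0)_i, where D acts on finitely supported sequences by its tridiagonal action, P_j(D) is the image of P_j under the polynomial functional calculus on linear endomorphisms, and e_0 = (1,0,0,…); (b) for every i ≥ 0 and every j ≥ 0, c_{ij} = (Q_i(J) c_{0,•})_j, where J acts on arbitrary real sequences by its tridiagonal action and c_{0,•} denotes the sequence (c_{0j})_{j≥0}. -/

import Mathlib

open Polynomial MeasureTheory Filter Topology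

noncomputable section

/-- Orthonormal polynomials of the Jacobi operator with diagonal `a` and off-diagonal `b`:
`P 0 = 1`, `P 1 = (X - a 0)/b 0`, and `X * P k = b (k-1) * P (k-1) + a k * P k + b k * P (k+1)`. -/
def orthPoly (a b : ℕ → ℝ) : ℕ → Polynomial ℝ
  | 0 => 1
  | 1 => Polynomial.C (b 0)⁻¹ * (Polynomial.X - Polynomial.C (a 0))
  | (k+2) => Polynomial.C (b (k+1))⁻¹ *
      ((Polynomial.X - Polynomial.C (a (k+1))) * orthPoly a b (k+1)
        - Polynomial.C (b k) * orthPoly a b k)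

/-- The tridiagonal action of a Jacobi operator on all real sequences, as a linear
endomorphism of the space of real sequences. -/
def jacobiEnd (a b : ℕ → ℝ) : Module.End ℝ (ℕ → ℝ) where
  toFun v := fun k => (if k = 0 then 0 else b (k-1) * v (k-1)) + a k * v k + b k * v (k+1)
  map_add' u v := by funext k; by_cases h : k = 0 <;> simp [h] <;> ring
  map_smul' r v := by funext k; by_cases h : k = 0 <;> simp [h] <;> ring

lemma orthPoly_rec (a b : ℕ → ℝ) (hb : ∀ k, b k ≠ 0) (k : ℕ) :
    X * orthPoly a b k =
      (if k = 0 then 0 else C (b (k-1)) * orthPoly a b (k-1))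
        + C (a k) * orthPoly a b k + C (b k) * orthPoly a b (k+1) := by
  have hC : ∀ (m : ℕ) (p : Polynomial ℝ), C (b m) * (C (b m)⁻¹ * p) = p := fun m p => by
    rw [← mul_assoc, ← C_mul, mul_inv_cancel₀ (hb m), C_1, one_mul]
  match k with
  | 0 =>
    show X * orthPoly a b 0 = 0 + C (a 0) * orthPoly a b 0 + C (b 0) * orthPoly a b 1
    rw [show orthPoly a b 1 = C (b 0)⁻¹ * (X - C (a 0)) from rfl, hC,
      show orthPoly a b 0 = 1 from rfl]
    ring
  | (m+1) =>
    show X * orthPoly a b (m+1) = C (b m) * orthPoly a b m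
      + C (a (m+1)) * orthPoly a b (m+1) + C (b (m+1)) * orthPoly a b (m+2)
    rw [show orthPoly a b (m+2) = C (b (m+1))⁻¹ * ((X - C (a (m+1))) * orthPoly a b (m+1)
      - C (b m) * orthPoly a b m) from rfl, hC]
    ring

lemma orthPoly_deg (a b : ℕ → ℝ) (k : ℕ) :
    (orthPoly a b k).natDegree ≤ k ∧
      (orthPoly a b k).coeff k = ∏ i ∈ Finset.range k, (b i)⁻¹ := by
  suffices h : ∀ k : ℕ, ((orthPoly a b k).natDegree ≤ k ∧
      (orthPoly a b k).coeff k = ∏ i ∈ Finset.range k, (b i)⁻¹) ∧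
      ((orthPoly a b (k+1)).natDegree ≤ k+1 ∧
      (orthPoly a b (k+1)).coeff (k+1) = ∏ i ∈ Finset.range (k+1), (b i)⁻¹) from (h k).1
  intro k
  induction k with
  | zero =>
    refine ⟨⟨?_, ?_⟩, ?_, ?_⟩
    · simp [orthPoly]
    · simp [orthPoly]
    · show (C (b 0)⁻¹ * (X - C (a 0))).natDegree ≤ 1
      refine natDegree_mul_le.trans ?_
      simp [natDegree_X_sub_C]
    · show (C (b 0)⁻¹ * (X - C (a 0))).coeff 1 = _
      simp [coeff_C_mul]
  | succ n ih =>
    refine ⟨ih.2, ?_, ?_⟩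
    · show (C (b (n+1))⁻¹ * ((X - C (a (n+1))) * orthPoly a b (n+1)
        - C (b n) * orthPoly a b n)).natDegree ≤ n+2
      refine natDegree_mul_le.trans ?_
      simp only [natDegree_C, zero_add]
      refine (natDegree_sub_le _ _).trans ?_
      refine max_le (natDegree_mul_le.trans ?_) (natDegree_mul_le.trans ?_)
      · rw [natDegree_X_sub_C]; have := ih.2.1; omega
      · simp only [natDegree_C, zero_add]; have := ih.1.1; omega
    · show (C (b (n+1))⁻¹ * ((X - C (a (n+1))) * orthPoly a b (n+1)
        - C (b n) * orthPoly a b n)).coeff (n+2) = _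
      have h1 : (orthPoly a b (n+1)).coeff (n+2) = 0 :=
        coeff_eq_zero_of_natDegree_lt (by have h := ih.2.1; have h' := ih.1.1; omega)
      have h0 : (orthPoly a b n).coeff (n+2) = 0 :=
        coeff_eq_zero_of_natDegree_lt (by have h := ih.2.1; have h' := ih.1.1; omega)
      rw [coeff_C_mul, coeff_sub, coeff_C_mul, h0, sub_mul, coeff_sub, coeff_X_mul,
        coeff_C_mul, h1, ih.2.2]
      simp only [Finset.prod_range_succ]
      ring

lemma orthPoly_linIndep (a b : ℕ → ℝ) (hb : ∀ k, b k ≠ 0) (n : ℕ) (d : ℕ → ℝ)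
    (h : ∑ i ∈ Finset.range n, C (d i) * orthPoly a b i = 0) :
    ∀ i < n, d i = 0 := by
  induction n with
  | zero => intro i hi; omega
  | succ n ih =>
    have hdn : d n = 0 := by
      have hco := congrArg (fun p => Polynomial.coeff p n) h
      simp only [finset_sum_coeff, coeff_C_mul, coeff_zero] at hco
      rw [Finset.sum_range_succ] at hco
      have hz : ∀ i ∈ Finset.range n, d i * (orthPoly a b i).coeff n = 0 := by
        intro i hi
        rw [coeff_eq_zero_of_natDegree_lt
          (lt_of_le_of_lt (orthPoly_deg a b i).1 (Finset.mem_range.1 hi)), mul_zero]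
      rw [Finset.sum_eq_zero hz, zero_add, (orthPoly_deg a b n).2] at hco
      have hprod : (∏ i ∈ Finset.range n, (b i)⁻¹) ≠ 0 :=
        Finset.prod_ne_zero_iff.2 fun i _ => inv_ne_zero (hb i)
      exact (mul_eq_zero.1 hco).resolve_right hprod
    have h' : ∑ i ∈ Finset.range n, C (d i) * orthPoly a b i = 0 := by
      rw [Finset.sum_range_succ, hdn, C_0, zero_mul, add_zero] at h
      exact h
    intro i hi
    rcases Nat.lt_succ_iff_lt_or_eq.1 hi with h2 | h2
    · exact ih h' i h2
    · rw [h2]; exact hdn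

lemma key (α β γ δ : ℕ → ℝ) (hβ : ∀ k, β k ≠ 0) (hδ : ∀ k, δ k ≠ 0)
    (c : ℕ → ℕ → ℝ)
    (hc : ∀ j, orthPoly α β j =
      ∑ i ∈ Finset.range (j+1), C (c i j) * orthPoly γ δ i)
    (hc0 : ∀ i j, j < i → c i j = 0) (i j : ℕ) :
    (if j = 0 then 0 else β (j-1) * c i (j-1)) + α j * c i j + β j * c i (j+1)
      = (if i = 0 then 0 else δ (i-1) * c (i-1) j) + γ i * c i j + δ i * c (i+1) j := by
  set Q : ℕ → Polynomial ℝ := orthPoly γ δ with hQ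
  have hc' : ∀ j n, j < n →
      orthPoly α β j = ∑ i ∈ Finset.range n, C (c i j) * Q i := by
    intro j n hjn
    rw [hc j]
    refine Finset.sum_subset (Finset.range_subset_range.2 hjn) ?_
    intro x _ hx'
    simp only [Finset.mem_range, not_lt] at hx'
    rw [hc0 x j (by omega), C_0, zero_mul]
  -- step 1 : expansion from the (α,β) recurrence
  have step1 : X * orthPoly α β j
      = ∑ i ∈ Finset.range (j+2),
          C ((if j = 0 then 0 else β (j-1) * c i (j-1)) + α j * c i j + β j * c i (j+1))
            * Q i := by
    rw [orthPoly_rec α β hβ j]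
    have e1 : C (α j) * orthPoly α β j
        = ∑ i ∈ Finset.range (j+2), C (α j * c i j) * Q i := by
      rw [hc' j (j+2) (by omega), Finset.mul_sum]
      exact Finset.sum_congr rfl fun i _ => by rw [← mul_assoc, ← C_mul]
    have e2 : C (β j) * orthPoly α β (j+1)
        = ∑ i ∈ Finset.range (j+2), C (β j * c i (j+1)) * Q i := by
      rw [hc' (j+1) (j+2) (by omega), Finset.mul_sum]
      exact Finset.sum_congr rfl fun i _ => by rw [← mul_assoc, ← C_mul]
    have e3 : (if j = 0 then 0 else C (β (j-1)) * orthPoly α β (j-1))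
        = ∑ i ∈ Finset.range (j+2), C (if j = 0 then 0 else β (j-1) * c i (j-1)) * Q i := by
      split_ifs with h
      · simp
      · rw [hc' (j-1) (j+2) (by omega), Finset.mul_sum]
        exact Finset.sum_congr rfl fun i _ => by rw [← mul_assoc, ← C_mul]
    rw [e1, e2, e3, ← Finset.sum_add_distrib, ← Finset.sum_add_distrib]
    refine Finset.sum_congr rfl fun i _ => ?_
    rw [C_add, C_add]; ring
  -- step 2 : expansion from the (γ,δ) recurrence
  have step2 : X * orthPoly α β j
      = ∑ i ∈ Finset.range (j+2),
          C ((if i = 0 then 0 else δ (i-1) * c (i-1) j) + γ i * c i j + δ i * c (i+1) j)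
            * Q i := by
    have hsplit : ∑ i ∈ Finset.range (j+2),
        C ((if i = 0 then 0 else δ (i-1) * c (i-1) j) + γ i * c i j + δ i * c (i+1) j) * Q i
        = (∑ i ∈ Finset.range (j+2),
            (if i = 0 then 0 else C (δ (i-1) * c (i-1) j) * Q i))
          + (∑ i ∈ Finset.range (j+2), C (γ i * c i j) * Q i)
          + (∑ i ∈ Finset.range (j+2), C (δ i * c (i+1) j) * Q i) := by
      rw [← Finset.sum_add_distrib, ← Finset.sum_add_distrib]
      refine Finset.sum_congr rfl fun i _ => ?_
      split_ifs with h
      · rw [C_add, C_add, C_0]; ring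
      · rw [C_add, C_add]; ring
    -- the three partial sums
    have hA : ∑ i ∈ Finset.range (j+2), (if i = 0 then 0 else C (δ (i-1) * c (i-1) j) * Q i)
        = ∑ m ∈ Finset.range (j+1), C (δ m * c m j) * Q (m+1) := by
      rw [Finset.sum_range_succ' (fun i => if i = 0 then 0 else C (δ (i-1) * c (i-1) j) * Q i) (j+1)]
      simp
    have hB : ∑ i ∈ Finset.range (j+2), C (γ i * c i j) * Q i
        = ∑ m ∈ Finset.range (j+1), C (γ m * c m j) * Q m := by
      rw [Finset.sum_range_succ]
      rw [hc0 (j+1) j (by omega)]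
      simp
    have hCsum : ∑ i ∈ Finset.range (j+2), C (δ i * c (i+1) j) * Q i
        = ∑ m ∈ Finset.range j, C (δ m * c (m+1) j) * Q m := by
      rw [Finset.sum_range_succ, Finset.sum_range_succ]
      rw [hc0 (j+1) j (by omega), hc0 (j+2) j (by omega)]
      simp
    rw [hsplit, hA, hB, hCsum]
    -- left side
    rw [hc j, Finset.mul_sum]
    have expand : ∀ m, C (c m j) * (X * Q m)
        = (if m = 0 then 0 else C (δ (m-1) * c m j) * Q (m-1))
          + C (γ m * c m j) * Q m + C (δ m * c m j) * Q (m+1) := by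
      intro m
      rw [show X * Q m = X * orthPoly γ δ m from rfl, orthPoly_rec γ δ hδ m]
      simp only [← hQ]
      split_ifs with h
      · rw [C_mul, C_mul]; ring
      · rw [C_mul, C_mul, C_mul]; ring
    have lhs1 : ∑ m ∈ Finset.range (j+1), X * (C (c m j) * Q m)
        = ∑ m ∈ Finset.range (j+1),
            ((if m = 0 then 0 else C (δ (m-1) * c m j) * Q (m-1))
              + C (γ m * c m j) * Q m + C (δ m * c m j) * Q (m+1)) := by
      refine Finset.sum_congr rfl fun m _ => ?_
      rw [← mul_assoc, mul_comm X (C (c m j)), mul_assoc]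
      exact expand m
    rw [lhs1, Finset.sum_add_distrib, Finset.sum_add_distrib]
    have ht1 : ∑ m ∈ Finset.range (j+1),
        (if m = 0 then 0 else C (δ (m-1) * c m j) * Q (m-1))
        = ∑ m ∈ Finset.range j, C (δ m * c (m+1) j) * Q m := by
      rw [Finset.sum_range_succ' (fun m => if m = 0 then 0 else C (δ (m-1) * c m j) * Q (m-1)) j]
      simp
    rw [ht1]
    ring
  -- combine
  have hzero : ∑ i ∈ Finset.range (j+2),
      C (((if j = 0 then 0 else β (j-1) * c i (j-1)) + α j * c i j + β j * c i (j+1))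
        - ((if i = 0 then 0 else δ (i-1) * c (i-1) j) + γ i * c i j + δ i * c (i+1) j)) * Q i
      = 0 := by
    have : ∀ i, C (((if j = 0 then 0 else β (j-1) * c i (j-1)) + α j * c i j + β j * c i (j+1))
        - ((if i = 0 then 0 else δ (i-1) * c (i-1) j) + γ i * c i j + δ i * c (i+1) j)) * Q i
        = C ((if j = 0 then 0 else β (j-1) * c i (j-1)) + α j * c i j + β j * c i (j+1)) * Q i
          - C ((if i = 0 then 0 else δ (i-1) * c (i-1) j) + γ i * c i j + δ i * c (i+1) j) * Q i := by
      intro i; rw [C_sub, sub_mul]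
    rw [Finset.sum_congr rfl fun i _ => this i, Finset.sum_sub_distrib, ← step1, ← step2,
      sub_self]
  by_cases hij : i < j + 2
  · have := orthPoly_linIndep γ δ hδ (j+2) _ hzero i hij
    linarith [this]
  · rw [hc0 i j (by omega), hc0 i (j+1) (by omega), hc0 (i+1) j (by omega),
      hc0 (i-1) j (by omega)]
    have hι : ¬ i = 0 := by omega
    rw [if_neg hι]
    by_cases hj : j = 0
    · rw [if_pos hj]; ring
    · rw [if_neg hj, hc0 i (j-1) (by omega)]; ring

lemma aeval_orthPoly {M : Type*} [AddCommGroup M] [Module ℝ M]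
    (a b : ℕ → ℝ) (hb : ∀ k, b k ≠ 0) (T : Module.End ℝ M) (v : ℕ → M)
    (hv : ∀ k, T (v k)
      = (if k = 0 then 0 else b (k-1) • v (k-1)) + a k • v k + b k • v (k+1)) :
    ∀ k, (Polynomial.aeval T (orthPoly a b k)) (v 0) = v k := by
  suffices h : ∀ k : ℕ, (Polynomial.aeval T (orthPoly a b k)) (v 0) = v k ∧
      (Polynomial.aeval T (orthPoly a b (k+1))) (v 0) = v (k+1) from fun k => (h k).1
  intro k
  induction k with
  | zero =>
    constructor
    · simp [orthPoly]
    · have h0 := hv 0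
      rw [if_pos rfl, zero_add] at h0
      show (Polynomial.aeval T (C (b 0)⁻¹ * (X - C (a 0)))) (v 0) = v 1
      simp only [map_mul, map_sub, aeval_X, aeval_C, Module.End.mul_apply,
        LinearMap.sub_apply, Module.algebraMap_end_apply]
      rw [h0, smul_add, add_sub_cancel_left, smul_smul, inv_mul_cancel₀ (hb 0), one_smul]
  | succ n ih =>
    refine ⟨ih.2, ?_⟩
    have h1 := hv (n+1)
    rw [if_neg (Nat.succ_ne_zero n), Nat.add_sub_cancel] at h1
    show (Polynomial.aeval T (C (b (n+1))⁻¹ * ((X - C (a (n+1))) * orthPoly a b (n+1)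
      - C (b n) * orthPoly a b n))) (v 0) = v (n+2)
    simp only [map_mul, map_sub, aeval_X, aeval_C, Module.End.mul_apply,
      LinearMap.sub_apply, Module.algebraMap_end_apply, ih.1, ih.2]
    rw [h1, smul_add, smul_add]
    have habel : ∀ x y z : M, x + y + z - y - x = z := fun x y z => by abel
    rw [habel, smul_smul, inv_mul_cancel₀ (hb (n+1)), one_smul]

/-- (a) The `j`-th column of `C_{J→D}` is `P_j(D) e₀`; (b) the `i`-th row of
`C_{J→D}` is `Q_i(J)` applied to the zeroth row. -/
theorem stmt1 (α β γ δ : ℕ → ℝ) (hβ : ∀ k, 0 < β k) (hδ : ∀ k, 0 < δ k)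
    (c : ℕ → ℕ → ℝ)
    (hc : ∀ j, orthPoly α β j =
      ∑ i ∈ Finset.range (j+1), Polynomial.C (c i j) * orthPoly γ δ i)
    (hc0 : ∀ i j, j < i → c i j = 0) :
    (∀ j i, c i j =
      (Polynomial.aeval (jacobiEnd γ δ) (orthPoly α β j))
        (fun k => if k = 0 then (1:ℝ) else 0) i) ∧
    (∀ i j, c i j =
      (Polynomial.aeval (jacobiEnd α β) (orthPoly γ δ i)) (fun m => c 0 m) j) := by
  have hβ' : ∀ k, β k ≠ 0 := fun k => (hβ k).ne'
  have hδ' : ∀ k, δ k ≠ 0 := fun k => (hδ k).ne'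
  have hkey := key α β γ δ hβ' hδ' c hc hc0
  have hc00 : c 0 0 = 1 := by
    have h := hc 0
    rw [show orthPoly α β 0 = 1 from rfl, Finset.range_one, Finset.sum_singleton,
      show orthPoly γ δ 0 = 1 from rfl, mul_one] at h
    have h2 := congrArg (fun p => Polynomial.coeff p 0) h
    simpa using h2.symm
  have hcol0 : (fun i => c i 0) = (fun k => if k = 0 then (1:ℝ) else 0) := by
    funext i
    by_cases h : i = 0
    · rw [h, hc00, if_pos rfl]
    · rw [if_neg h, hc0 i 0 (by omega)]
  constructor
  · -- part (a)
    have hv : ∀ j, (jacobiEnd γ δ) (fun m => c m j)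
        = (if j = 0 then 0 else β (j-1) • (fun m => c m (j-1)))
          + α j • (fun m => c m j) + β j • (fun m => c m (j+1)) := by
      intro j
      funext i
      have hk := (hkey i j).symm
      show (if i = 0 then 0 else δ (i-1) * c (i-1) j) + γ i * c i j + δ i * c (i+1) j = _
      rw [hk]
      by_cases h : j = 0 <;> simp [h]
    intro j i
    have h2 := congrFun (aeval_orthPoly α β hβ' (jacobiEnd γ δ) (fun j m => c m j) hv j) i
    rw [← hcol0]
    exact h2.symm
  · -- part (b)
    have hv : ∀ i, (jacobiEnd α β) (fun m => c i m)
        = (if i = 0 then 0 else δ (i-1) • (fun m => c (i-1) m))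
          + γ i • (fun m => c i m) + δ i • (fun m => c (i+1) m) := by
      intro i
      funext j
      have hk := hkey i j
      show (if j = 0 then 0 else β (j-1) * c i (j-1)) + α j * c i j + β j * c i (j+1) = _
      rw [hk]
      by_cases h : i = 0 <;> simp [h]
    intro i j
    have h2 := congrFun (aeval_orthPoly γ δ hδ' (jacobiEnd α β) (fun i m => c i m) hv i) j
    exact h2.symm

end
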